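/- The infimum, over all ℝ-words w over X = {a, b} whose evaluation equals g₁ = ((1, 0), 0, 0), of the length ℓ(w), equals 1 (so the Stoll length of g₁ with respect to X is 1, and by the previous statement this infimum is not attained). -/

import Mathlib

noncomputable section

/-- The Engel Lie group `Ē`: underlying set `ℝ² × ℝ × ℝ`, with coordinates
`(x, y)` (endpoint), `A` (signed area) and `B` (the `y`-moment). -/
@[ext]
structure Engel where
  x : ℝ
  y : ℝ
  A : ℝ
  B : ℝ

namespace Engel

instance : Mul Engel :=
  ⟨fun g h =>
    ⟨g.x + h.x, g.y + h.y,
     g.A + h.A + (g.x * h.y - g.y * h.x) / 2,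
     g.B + h.B + g.y * h.A + (2 * g.y + h.y) * (g.x * h.y - g.y * h.x) / 6⟩⟩

instance : One Engel := ⟨⟨0, 0, 0, 0⟩⟩

instance : Inv Engel := ⟨fun g => ⟨-g.x, -g.y, -g.A, -g.B + g.y * g.A⟩⟩

@[simp] lemma mul_x (g h : Engel) : (g * h).x = g.x + h.x := rfl
@[simp] lemma mul_y (g h : Engel) : (g * h).y = g.y + h.y := rfl
@[simp] lemma mul_A (g h : Engel) :
    (g * h).A = g.A + h.A + (g.x * h.y - g.y * h.x) / 2 := rfl
@[simp] lemma mul_B (g h : Engel) :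
    (g * h).B = g.B + h.B + g.y * h.A
      + (2 * g.y + h.y) * (g.x * h.y - g.y * h.x) / 6 := rfl
@[simp] lemma one_x : (1 : Engel).x = 0 := rfl
@[simp] lemma one_y : (1 : Engel).y = 0 := rfl
@[simp] lemma one_A : (1 : Engel).A = 0 := rfl
@[simp] lemma one_B : (1 : Engel).B = 0 := rfl
@[simp] lemma inv_x (g : Engel) : g⁻¹.x = -g.x := rfl
@[simp] lemma inv_y (g : Engel) : g⁻¹.y = -g.y := rfl
@[simp] lemma inv_A (g : Engel) : g⁻¹.A = -g.A := rfl
@[simp] lemma inv_B (g : Engel) : g⁻¹.B = -g.B + g.y * g.A := rfl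

instance : Group Engel where
  mul_assoc a b c := by ext <;> simp <;> ring
  one_mul a := by ext <;> simp
  mul_one a := by ext <;> simp
  inv_mul_cancel a := by
    ext <;>
      simp only [mul_x, mul_y, mul_A, mul_B, inv_x, inv_y, inv_A, inv_B,
        one_x, one_y, one_A, one_B] <;> ring

/-- `a^t`: the straight segment from `(0,0)` to `(t,t)`. -/
def aPow (t : ℝ) : Engel := ⟨t, t, 0, 0⟩

/-- `b^t`: the straight segment from `(0,0)` to `(t,-t)`. -/
def bPow (t : ℝ) : Engel := ⟨t, -t, 0, 0⟩

end Engel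

namespace Engel

/-- An ℝ-word over `X = {a, b}` is a finite sequence of pairs `(xᵢ, tᵢ)` with
`xᵢ ∈ {a, b}` (encoded as `Bool`: `true ↦ a`, `false ↦ b`) and `tᵢ ∈ ℝ`.
Its evaluation is the product `x₁^{t₁}·…·x_k^{t_k}` in `Ē`. -/
def wordEval (w : List (Bool × ℝ)) : Engel :=
  (w.map fun p => if p.1 then aPow p.2 else bPow p.2).prod

/-- The length `ℓ(w) = Σᵢ |tᵢ|` of an ℝ-word. -/
def wordLen (w : List (Bool × ℝ)) : ℝ := (w.map fun p => |p.2|).sum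

end Engel

/-!
The `x`-coordinate of `w̄` is `Σ tᵢ`, so every word evaluating to `g₁` has length at least `1`.
Conversely, the zigzag `a^u b^u b^u a^u` closes up in `y` and in signed area and evaluates to
`((4u, 0), 0, -2u³/3)`: it moves along the `x`-axis at cost `4|u|`, with an error of order `u³`
in `B` only. Such elements commute, so `m³` zigzags of size `p` followed by one of size `-mp`
cancel the error exactly; for `p = 1/(4m(m² - 1))` this is a word for `g₁` of length
`(m² + 1)/(m² - 1) → 1`.
-/

namespace Engel

lemma wordEval_append (v w : List (Bool × ℝ)) :
    wordEval (v ++ w) = wordEval v * wordEval w := by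
  simp [wordEval]

lemma wordLen_append (v w : List (Bool × ℝ)) :
    wordLen (v ++ w) = wordLen v + wordLen w := by
  simp [wordLen]

lemma wordEval_flatten_replicate (n : ℕ) (w : List (Bool × ℝ)) :
    wordEval (List.replicate n w).flatten = wordEval w ^ n := by
  induction n with
  | zero => rfl
  | succ n ih => rw [List.replicate_succ, List.flatten_cons, wordEval_append, ih, pow_succ']

lemma wordLen_flatten_replicate (n : ℕ) (w : List (Bool × ℝ)) :
    wordLen (List.replicate n w).flatten = n * wordLen w := by
  induction n with
  | zero => simp [wordLen]
  | succ n ih => rw [List.replicate_succ, List.flatten_cons, wordLen_append, ih]; push_cast; ring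

lemma abs_wordEval_x_le_wordLen (w : List (Bool × ℝ)) : |(wordEval w).x| ≤ wordLen w := by
  induction w with
  | nil => simp [wordEval, wordLen]
  | cons p w ih =>
    obtain ⟨b, t⟩ := p
    have hx : (wordEval ((b, t) :: w)).x = t + (wordEval w).x := by
      cases b <;> rfl
    have hl : wordLen ((b, t) :: w) = |t| + wordLen w := rfl
    rw [hx, hl]
    exact (abs_add_le _ _).trans (by gcongr)

lemma mk_zero_zero_mul (x B x' B' : ℝ) :
    (⟨x, 0, 0, B⟩ * ⟨x', 0, 0, B'⟩ : Engel) = ⟨x + x', 0, 0, B + B'⟩ := by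
  ext <;> simp

lemma mk_zero_zero_pow (x B : ℝ) (n : ℕ) :
    (⟨x, 0, 0, B⟩ : Engel) ^ n = ⟨n * x, 0, 0, n * B⟩ := by
  induction n with
  | zero => ext <;> simp
  | succ n ih => rw [pow_succ, ih, mk_zero_zero_mul]; push_cast; ext <;> ring

def zigzag (u : ℝ) : List (Bool × ℝ) := [(true, u), (false, u), (false, u), (true, u)]

lemma wordEval_zigzag (u : ℝ) : wordEval (zigzag u) = ⟨4 * u, 0, 0, -2 * u ^ 3 / 3⟩ := by
  have : wordEval (zigzag u) = aPow u * bPow u * bPow u * aPow u := by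
    simp [wordEval, zigzag, mul_assoc]
  rw [this]
  ext <;> simp only [mul_x, mul_y, mul_A, mul_B, aPow, bPow] <;> ring

lemma wordLen_zigzag (u : ℝ) : wordLen (zigzag u) = 4 * |u| := by
  simp only [wordLen, zigzag, List.map_cons, List.map_nil, List.sum_cons, List.sum_nil]; ring

def g1Word (m : ℕ) : List (Bool × ℝ) :=
  let p : ℝ := 1 / (4 * m * (m ^ 2 - 1))
  (List.replicate (m ^ 3) (zigzag p)).flatten ++ zigzag (-(m * p))

lemma wordEval_g1Word {m : ℕ} (hm : 1 < m) : wordEval (g1Word m) = ⟨1, 0, 0, 0⟩ := by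
  have hm' : (1 : ℝ) < m := by exact_mod_cast hm
  have hd : (m : ℝ) ^ 2 - 1 ≠ 0 := by nlinarith
  rw [g1Word, wordEval_append, wordEval_flatten_replicate, wordEval_zigzag, wordEval_zigzag,
    mk_zero_zero_pow, mk_zero_zero_mul]
  congr 1
  · field_simp
    push_cast
    ring
  · push_cast
    ring

lemma wordLen_g1Word {m : ℕ} (hm : 1 < m) :
    wordLen (g1Word m) = 1 + 2 / ((m : ℝ) ^ 2 - 1) := by
  have hm' : (1 : ℝ) < m := by exact_mod_cast hm
  have hd : 0 < (m : ℝ) ^ 2 - 1 := by nlinarith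
  have hp : 0 < 1 / (4 * m * ((m : ℝ) ^ 2 - 1)) := by positivity
  rw [g1Word, wordLen_append, wordLen_flatten_replicate, wordLen_zigzag, wordLen_zigzag, abs_neg,
    abs_of_pos hp, abs_of_pos (by positivity)]
  push_cast
  field_simp
  ring

/-- The infimum, over all ℝ-words `w` over `X = {a, b}` whose evaluation equals
`g₁ = ((1, 0), 0, 0)`, of the length `ℓ(w)`, equals `1`; i.e. `1` is the greatest
lower bound of the set of lengths of such words (so the Stoll length of `g₁`
with respect to `X` is `1`). -/
theorem stoll_length_g1_eq_one :
    IsGLB {r : ℝ | ∃ w : List (Bool × ℝ), wordEval w = ⟨1, 0, 0, 0⟩ ∧ wordLen w = r} 1 := by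
  refine ⟨?_, fun c hc => le_of_forall_pos_lt_add fun ε hε => ?_⟩
  · rintro _ ⟨w, hw, rfl⟩
    simpa [hw] using abs_wordEval_x_le_wordLen w
  · obtain ⟨n, hn⟩ := exists_nat_gt (2 / ε)
    have hm : 1 < n + 2 := by omega
    calc c ≤ wordLen (g1Word (n + 2)) := hc ⟨_, wordEval_g1Word hm, rfl⟩
      _ < 1 + ε := by
        have hn' : (2 : ℝ) < n * ε := (div_lt_iff₀ hε).mp hn
        rw [wordLen_g1Word hm, add_lt_add_iff_left, div_lt_iff₀ (by push_cast; nlinarith)]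
        push_cast
        nlinarith

end Engel
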